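/- arXiv:1705.05957 — 2 statements merged into one kernel-verified Lean document; each statement's English description precedes it below -/
import Mathlib

section
/- If two random variables Y and Y' taking values in R satisfy: there exist events E (in the sample space of Y) and E' (in the sample space of Y') with P(E) ≥ 1 − δ and P(E') ≥ 1 − δ, such that Y conditioned on E and Y' conditioned on E' are (ε, 0)-indistinguishable, then Y and Y' are (ε, δ)-indistinguishable. -/
open MeasureTheory ProbabilityTheory

/-- Random variables `Y` (under `P`) and `Y'` (under `P'`) are `(ε, δ)`-indistinguishable:
for every measurable `S`, `P(Y ∈ S) ≤ e^ε·P'(Y' ∈ S) + δ` and symmetrically. -/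
def Indist {Ω Ω' R : Type*} [MeasurableSpace Ω] [MeasurableSpace Ω'] [MeasurableSpace R]
    (P : Measure Ω) (P' : Measure Ω') (Y : Ω → R) (Y' : Ω' → R) (ε δ : ℝ) : Prop :=
  ∀ S : Set R, MeasurableSet S →
    P (Y ⁻¹' S) ≤ ENNReal.ofReal (Real.exp ε) * P' (Y' ⁻¹' S) + ENNReal.ofReal δ ∧
    P' (Y' ⁻¹' S) ≤ ENNReal.ofReal (Real.exp ε) * P (Y ⁻¹' S) + ENNReal.ofReal δ

lemma aux_one_side {Ω Ω' R : Type*} [MeasurableSpace Ω] [MeasurableSpace Ω']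
    [MeasurableSpace R]
    (P : Measure Ω) (P' : Measure Ω') [IsProbabilityMeasure P] [IsProbabilityMeasure P']
    (Y : Ω → R) (Y' : Ω' → R) (ε δ : ℝ) (hε : 0 ≤ ε) (hδ0 : 0 ≤ δ) (hδ1 : δ < 1)
    (E : Set Ω) (E' : Set Ω') (hE : MeasurableSet E) (hE' : MeasurableSet E')
    (hPE : ENNReal.ofReal (1 - δ) ≤ P E) (hPE' : ENNReal.ofReal (1 - δ) ≤ P' E')
    (S : Set R)
    (h : (P[|E]) (Y ⁻¹' S) ≤ ENNReal.ofReal (Real.exp ε) * (P'[|E']) (Y' ⁻¹' S)) :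
    P (Y ⁻¹' S) ≤ ENNReal.ofReal (Real.exp ε) * P' (Y' ⁻¹' S) + ENNReal.ofReal δ := by
  have h1δ : (0:ℝ) < 1 - δ := by linarith
  have hE0 : P E ≠ 0 := by
    intro h0
    rw [h0, nonpos_iff_eq_zero, ENNReal.ofReal_eq_zero] at hPE
    linarith
  have hE'0 : P' E' ≠ 0 := by
    intro h0
    rw [h0, nonpos_iff_eq_zero, ENNReal.ofReal_eq_zero] at hPE'
    linarith
  haveI : IsProbabilityMeasure (P[|E]) := cond_isProbabilityMeasure hE0
  haveI : IsProbabilityMeasure (P'[|E']) := cond_isProbabilityMeasure hE'0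
  set k : ℝ := Real.exp ε with hk
  have hk1 : (1:ℝ) ≤ k := Real.one_le_exp hε
  -- real-valued quantities
  set p : ℝ := (P (Y ⁻¹' S)).toReal
  set p' : ℝ := (P' (Y' ⁻¹' S)).toReal
  set e : ℝ := (P E).toReal
  set e' : ℝ := (P' E').toReal
  set q : ℝ := ((P[|E]) (Y ⁻¹' S)).toReal
  set q' : ℝ := ((P'[|E']) (Y' ⁻¹' S)).toReal
  have hp1 : p ≤ 1 := by
    have := prob_le_one (μ := P) (s := Y ⁻¹' S)
    exact ENNReal.toReal_le_of_le_ofReal zero_le_one (by simpa using this)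
  have hq1 : q ≤ 1 := by
    have := prob_le_one (μ := P[|E]) (s := Y ⁻¹' S)
    exact ENNReal.toReal_le_of_le_ofReal zero_le_one (by simpa using this)
  have hq'1 : q' ≤ 1 := by
    have := prob_le_one (μ := P'[|E']) (s := Y' ⁻¹' S)
    exact ENNReal.toReal_le_of_le_ofReal zero_le_one (by simpa using this)
  have he1 : e ≤ 1 := by
    have := prob_le_one (μ := P) (s := E)
    exact ENNReal.toReal_le_of_le_ofReal zero_le_one (by simpa using this)
  have he'1 : e' ≤ 1 := by
    have := prob_le_one (μ := P') (s := E')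
    exact ENNReal.toReal_le_of_le_ofReal zero_le_one (by simpa using this)
  have hp0 : 0 ≤ p := ENNReal.toReal_nonneg
  have hq0 : 0 ≤ q := ENNReal.toReal_nonneg
  have hq'0 : 0 ≤ q' := ENNReal.toReal_nonneg
  have hp'0 : 0 ≤ p' := ENNReal.toReal_nonneg
  have hedelta : 1 - δ ≤ e := by
    have := ENNReal.toReal_mono (measure_ne_top P E) hPE
    rwa [ENNReal.toReal_ofReal h1δ.le] at this
  have he'delta : 1 - δ ≤ e' := by
    have := ENNReal.toReal_mono (measure_ne_top P' E') hPE'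
    rwa [ENNReal.toReal_ofReal h1δ.le] at this
  -- q ≤ k * q'
  have hqq' : q ≤ k * q' := by
    have := ENNReal.toReal_mono (by
      exact ENNReal.mul_ne_top ENNReal.ofReal_ne_top (measure_ne_top _ _)) h
    rwa [ENNReal.toReal_mul, ENNReal.toReal_ofReal (Real.exp_nonneg ε)] at this
  -- p ≤ e * q + (1 - e)
  have hsplit : p ≤ e * q + (1 - e) := by
    have hsub : Y ⁻¹' S ⊆ (E ∩ Y ⁻¹' S) ∪ Eᶜ := by
      intro x hx
      by_cases hxE : x ∈ E
      · exact Or.inl ⟨hxE, hx⟩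
      · exact Or.inr hxE
    have h1 : P (Y ⁻¹' S) ≤ P (E ∩ Y ⁻¹' S) + P Eᶜ :=
      le_trans (measure_mono hsub) (measure_union_le _ _)
    have h2 : P (E ∩ Y ⁻¹' S) = P E * (P[|E]) (Y ⁻¹' S) := by
      rw [cond_apply hE, ← mul_assoc, ENNReal.mul_inv_cancel hE0 (measure_ne_top _ _), one_mul]
    have h3 : (P Eᶜ).toReal = 1 - e := by
      rw [measure_compl hE (measure_ne_top _ _), measure_univ,
        ENNReal.toReal_sub_of_le prob_le_one ENNReal.one_ne_top, ENNReal.toReal_one]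
    have := ENNReal.toReal_mono (by
      exact ENNReal.add_ne_top.mpr ⟨measure_ne_top _ _, measure_ne_top _ _⟩) h1
    rw [ENNReal.toReal_add (measure_ne_top _ _) (measure_ne_top _ _), h2,
      ENNReal.toReal_mul, h3] at this
    exact this
  -- p' ≥ e' * q'
  have hp'q' : e' * q' ≤ p' := by
    have h2 : P' (E' ∩ Y' ⁻¹' S) = P' E' * (P'[|E']) (Y' ⁻¹' S) := by
      rw [cond_apply hE', ← mul_assoc, ENNReal.mul_inv_cancel hE'0 (measure_ne_top _ _), one_mul]
    have h1 : P' (E' ∩ Y' ⁻¹' S) ≤ P' (Y' ⁻¹' S) := measure_mono Set.inter_subset_right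
    have := ENNReal.toReal_mono (measure_ne_top _ _) h1
    rw [h2, ENNReal.toReal_mul] at this
    exact this
  -- the real inequality
  have key : p ≤ k * p' + δ := by
    rcases le_or_gt (k * q') 1 with hc | hc
    · -- e * q + (1 - e) ≤ e * (k q') + (1-e) ≤ (1-δ)(kq') + δ ≤ k e' q' + δ ≤ k p' + δ
      have h4 : e * q + (1 - e) ≤ (1 - δ) * (k * q') + δ := by
        nlinarith [mul_le_mul_of_nonneg_left hqq' (by linarith : (0:ℝ) ≤ e)]
      have h5 : (1 - δ) * (k * q') ≤ k * (e' * q') := by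
        nlinarith
      nlinarith [mul_le_mul_of_nonneg_left hp'q' (by linarith : (0:ℝ) ≤ k)]
    · have h5 : (1 - δ) ≤ k * (e' * q') := by
        nlinarith
      nlinarith [mul_le_mul_of_nonneg_left hp'q' (by linarith : (0:ℝ) ≤ k)]
  -- back to ENNReal
  calc P (Y ⁻¹' S) = ENNReal.ofReal p := (ENNReal.ofReal_toReal (measure_ne_top _ _)).symm
    _ ≤ ENNReal.ofReal (k * p' + δ) := ENNReal.ofReal_le_ofReal key
    _ = ENNReal.ofReal (k * p') + ENNReal.ofReal δ := ENNReal.ofReal_add (by positivity) hδ0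
    _ = ENNReal.ofReal k * ENNReal.ofReal p' + ENNReal.ofReal δ := by
        rw [ENNReal.ofReal_mul (Real.exp_nonneg ε)]
    _ = ENNReal.ofReal k * P' (Y' ⁻¹' S) + ENNReal.ofReal δ := by
        rw [ENNReal.ofReal_toReal (measure_ne_top _ _)]

/-- If there are events `E`, `E'` with probability at least `1 − δ` such that
`Y` conditioned on `E` and `Y'` conditioned on `E'` are `(ε, 0)`-indistinguishable,
then `Y` and `Y'` are `(ε, δ)`-indistinguishable. -/
theorem indist_of_conditional {Ω Ω' R : Type*} [MeasurableSpace Ω] [MeasurableSpace Ω']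
    [MeasurableSpace R]
    (P : Measure Ω) (P' : Measure Ω') [IsProbabilityMeasure P] [IsProbabilityMeasure P']
    (Y : Ω → R) (Y' : Ω' → R) (ε δ : ℝ) (hε : 0 ≤ ε) (hδ0 : 0 ≤ δ) (hδ1 : δ ≤ 1)
    (E : Set Ω) (E' : Set Ω') (hE : MeasurableSet E) (hE' : MeasurableSet E')
    (hPE : ENNReal.ofReal (1 - δ) ≤ P E) (hPE' : ENNReal.ofReal (1 - δ) ≤ P' E')
    (hcond : Indist (P[|E]) (P'[|E']) Y Y' ε 0) :
    Indist P P' Y Y' ε δ := by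
  intro S hS
  rcases lt_or_eq_of_le hδ1 with hδ | hδ
  · obtain ⟨h1, h2⟩ := hcond S hS
    rw [ENNReal.ofReal_zero, add_zero] at h1 h2
    exact ⟨aux_one_side P P' Y Y' ε δ hε hδ0 hδ E E' hE hE' hPE hPE' S h1,
      aux_one_side P' P Y' Y ε δ hε hδ0 hδ E' E hE' hE hPE' hPE S h2⟩
  · subst hδ
    rw [ENNReal.ofReal_one]
    constructor
    · exact prob_le_one.trans le_add_self
    · exact prob_le_one.trans le_add_self
end

section
/- If q_x(D) = 0 and q_x(D') = 1 for neighbouring datasets D, D', then the outputs a_x(D) (identically 0) and a_x(D') (the thresholded Laplace-perturbed count) are (0, δ/2)-indistinguishable: for every set S, P(a_x(D) ∈ S) ≤ P(a_x(D') ∈ S) + δ/2 and P(a_x(D') ∈ S) ≤ P(a_x(D) ∈ S) + δ/2. -/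
/-! The mechanism is `0` except on the event that the noise exceeds the threshold
`T = 2 ln(2/δ)/ε`, so on any event its law differs from `dirac 0` by at most the probability
of that event, the Laplace tail `exp (-T / (2/ε)) / 2 = δ / 4`. -/

open MeasureTheory Set Real

/-- The Laplace distribution with mean 0 and scale `b`. -/
noncomputable def laplace (b : ℝ) : Measure ℝ :=
  volume.withDensity (fun x => ENNReal.ofReal (1 / (2 * b) * Real.exp (-|x| / b)))

lemma integral_exp_neg_div_Ioi {b : ℝ} (hb : 0 < b) (a : ℝ) :
    ∫ x in Ioi a, exp (-x / b) = b * exp (-a / b) := by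
  have h := integral_comp_mul_left_Ioi (fun y => exp (-y)) a (inv_pos.2 hb)
  simp only [integral_exp_neg_Ioi, smul_eq_mul, inv_inv] at h
  simpa only [neg_div, div_eq_inv_mul, mul_neg] using h

lemma integral_exp_neg_abs_div {b : ℝ} (hb : 0 < b) : ∫ x, exp (-|x| / b) = 2 * b := by
  rw [integral_comp_abs (f := fun y => exp (-y / b)), integral_exp_neg_div_Ioi hb, neg_zero,
    zero_div, exp_zero, mul_one]

lemma laplace_apply {b : ℝ} (hb : 0 < b) {s : Set ℝ} (hs : MeasurableSet s)
    (hint : IntegrableOn (fun x => exp (-|x| / b)) s) :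
    laplace b s = ENNReal.ofReal ((∫ x in s, exp (-|x| / b)) / (2 * b)) := by
  rw [laplace, withDensity_apply _ hs, ← ofReal_integral_eq_lintegral_ofReal (hint.const_mul _)
    (ae_of_all _ fun x => by positivity), integral_const_mul, one_div_mul_eq_div]

lemma isProbabilityMeasure_laplace {b : ℝ} (hb : 0 < b) : IsProbabilityMeasure (laplace b) := by
  have hint : Integrable (fun x => exp (-|x| / b)) :=
    .of_integral_ne_zero (by rw [integral_exp_neg_abs_div hb]; positivity)
  constructor
  rw [laplace_apply hb MeasurableSet.univ hint.integrableOn, Measure.restrict_univ,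
    integral_exp_neg_abs_div hb, div_self (by positivity), ENNReal.ofReal_one]

lemma laplace_Ici {b : ℝ} (hb : 0 < b) {a : ℝ} (ha : 0 ≤ a) :
    laplace b (Ici a) = ENNReal.ofReal (exp (-a / b) / 2) := by
  have hI : ∫ x in Ici a, exp (-|x| / b) = b * exp (-a / b) := by
    rw [integral_Ici_eq_integral_Ioi, ← integral_exp_neg_div_Ioi hb]
    exact setIntegral_congr_fun measurableSet_Ioi fun x hx => by
      rw [abs_of_pos (ha.trans_lt hx)]
  rw [laplace_apply hb measurableSet_Ici (.of_integral_ne_zero (by rw [hI]; positivity)), hI]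
  congr 1
  field_simp

section Dirac

variable {α β : Type*} [MeasurableSpace α] [MeasurableSpace β] {μ : Measure α}
  [IsProbabilityMeasure μ] {f : α → β} {c : β} {A : Set α} {S : Set β}

lemma map_apply_le_dirac_apply_add (hf : Measurable f) (hS : MeasurableSet S)
    (hA : ∀ x ∉ A, f x = c) : μ.map f S ≤ Measure.dirac c S + μ A := by
  rw [Measure.map_apply hf hS, Measure.dirac_apply' _ hS]
  by_cases hc : c ∈ S
  · rw [indicator_of_mem hc, Pi.one_apply]
    exact prob_le_one.trans le_self_add
  · refine le_add_left (measure_mono fun x hx => ?_)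
    by_contra hxA
    exact hc (hA x hxA ▸ hx : c ∈ S)

lemma dirac_apply_le_map_apply_add (hf : Measurable f) (hS : MeasurableSet S)
    (hA : ∀ x ∉ A, f x = c) : Measure.dirac c S ≤ μ.map f S + μ A := by
  rw [Measure.map_apply hf hS, Measure.dirac_apply' _ hS]
  by_cases hc : c ∈ S
  · rw [indicator_of_mem hc, Pi.one_apply, ← measure_univ (μ := μ)]
    refine (measure_mono fun x _ => ?_).trans (measure_union_le _ _)
    by_cases hxA : x ∈ A
    · exact Or.inr hxA
    · exact Or.inl (show f x ∈ S by rwa [hA x hxA])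
  · rw [indicator_of_notMem hc]
    exact zero_le

end Dirac

/-- If `q_x(D) = 0` and `q_x(D') = 1`, then the outputs `a_x(D)` (identically `0`) and
`a_x(D')` (the thresholded Laplace-perturbed count `1 + Lap(2/ε)`, zeroed out below the
threshold `2·ln(2/δ)/ε + 1`) are `(0, δ/2)`-indistinguishable. -/
theorem sbh_zero_one_indist (ε δ : ℝ) (hε : 0 < ε) (hδ : δ ∈ Set.Ioo (0 : ℝ) 1)
    (S : Set ℝ) (hS : MeasurableSet S) :
    (Measure.dirac (0 : ℝ)) S ≤
        (laplace (2 / ε)).map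
          (fun z => if 2 * Real.log (2 / δ) / ε + 1 ≤ 1 + z then 1 + z else 0) S
        + ENNReal.ofReal (δ / 2) ∧
      (laplace (2 / ε)).map
          (fun z => if 2 * Real.log (2 / δ) / ε + 1 ≤ 1 + z then 1 + z else 0) S ≤
        (Measure.dirac (0 : ℝ)) S + ENNReal.ofReal (δ / 2) := by
  obtain ⟨hδ0, hδ1⟩ := hδ
  have hb : 0 < 2 / ε := by positivity
  have := isProbabilityMeasure_laplace hb
  set T := 2 * log (2 / δ) / ε with hT_def
  have hT : 0 ≤ T := by
    have := log_pos (show 1 < 2 / δ by rw [lt_div_iff₀ hδ0]; linarith)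
    positivity
  have hf : Measurable fun z : ℝ => if T + 1 ≤ 1 + z then 1 + z else 0 :=
    Measurable.ite (measurableSet_le measurable_const (by fun_prop)) (by fun_prop)
      measurable_const
  have hA : ∀ z ∉ Ici T, (if T + 1 ≤ 1 + z then 1 + z else 0) = 0 := fun z hz =>
    if_neg (by rw [mem_Ici, not_le] at hz; linarith)
  have htail : laplace (2 / ε) (Ici T) ≤ ENNReal.ofReal (δ / 2) := by
    have hexp : exp (-T / (2 / ε)) = δ / 2 := by
      rw [show -T / (2 / ε) = -log (2 / δ) by rw [hT_def]; field_simp, exp_neg,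
        exp_log (by positivity), inv_div]
    rw [laplace_Ici hb hT, hexp]
    exact ENNReal.ofReal_le_ofReal (by linarith)
  exact ⟨(dirac_apply_le_map_apply_add hf hS hA).trans (by gcongr),
    (map_apply_le_dirac_apply_add hf hS hA).trans (by gcongr)⟩
end
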